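/- With X_0 = { h_1(ζ^{ai}) : 0 ≤ i ≤ b-1 }, the multiplication mapping X_0 × X_{s_1} × ⋯ × X_{s_{n-1}} → H_b, (d_0, d_1, ..., d_{n-1}) ↦ d_0 d_1 ⋯ d_{n-1}, is a bijection. -/

import Mathlib

noncomputable section

open scoped Pointwise

/-- The general linear group `GL_n(K)`. -/
abbrev GLn (K : Type) [Field K] (n : ℕ) : Type := GL (Fin n) K

/-- `g` is a permutation matrix. -/
def IsPermMat {K : Type} [Field K] {n : ℕ} (g : GLn K n) : Prop :=
  ∃ σ : Equiv.Perm (Fin n),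
    ∀ i j : Fin n, (g : Matrix (Fin n) (Fin n) K) i j = if σ j = i then 1 else 0

/-- `W`, the group of permutation matrices in `GL_n(K)`. -/
def Wset (K : Type) [Field K] (n : ℕ) : Set (GLn K n) := {g | IsPermMat g}

/-- The set `S = {s_1, …, s_{n-1}}` of Coxeter generators of `W`: the matrices of the
adjacent transpositions `(i, i+1)`. -/
def Sset (K : Type) [Field K] (n : ℕ) : Set (GLn K n) :=
  {g | ∃ i j : Fin n, (i : ℕ) + 1 = (j : ℕ) ∧
    ∀ k l : Fin n, (g : Matrix (Fin n) (Fin n) K) k l = if Equiv.swap i j l = k then 1 else 0}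

/-- The set `𝒯 = { w s_i w⁻¹ : w ∈ W, s_i ∈ S }` of reflections of `W`. -/
def Tset (K : Type) [Field K] (n : ℕ) : Set (GLn K n) :=
  {t | ∃ w ∈ Wset K n, ∃ s ∈ Sset K n, t = w * s * w⁻¹}

/-- `H_b`: the group of diagonal matrices whose entries are `b`-th roots of unity
(i.e. entries in `F_b`). -/
def Hbset (K : Type) [Field K] (n b : ℕ) : Set (GLn K n) :=
  {g | (∀ i j : Fin n, i ≠ j → (g : Matrix (Fin n) (Fin n) K) i j = 0) ∧
    ∀ i : Fin n, (g : Matrix (Fin n) (Fin n) K) i i ^ b = 1}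

/-- The group `WH_b`: the set of products `w * d` with `w ∈ W` and `d ∈ H_b`. -/
def WHbset (K : Type) [Field K] (n b : ℕ) : Set (GLn K n) :=
  {x | ∃ w ∈ Wset K n, ∃ d ∈ Hbset K n b, x = w * d}

/-- The length function on monomial matrices: the number of inversions of the underlying
permutation.  For `x = w d ∈ WH_b` this is the Coxeter length `ℓ(w)`, i.e. `len` is the
length function of `W` lifted to `WH_b` via `ℓ(wd) = ℓ(dw) = ℓ(w)`. -/
def len {K : Type} [Field K] {n : ℕ} (g : GLn K n) : ℕ :=
  Set.ncard {p : Fin n × Fin n | p.1 < p.2 ∧ ∃ i i' : Fin n, i' < i ∧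
    (g : Matrix (Fin n) (Fin n) K) i p.1 ≠ 0 ∧ (g : Matrix (Fin n) (Fin n) K) i' p.2 ≠ 0}

/-- The diagonal matrix `h_{k,l}(α) = h_k(α) h_l((-1)^{b-1} α⁻¹)`. -/
def hmat (K : Type) [Field K] {n : ℕ} (b : ℕ) (k l : Fin n) (α : K) :
    Matrix (Fin n) (Fin n) K :=
  Matrix.diagonal fun p => if p = k then α else if p = l then (-1 : K) ^ (b - 1) * α⁻¹ else 1

/-- For a reflection `t` interchanging the `k`-th and `l`-th standard basis vectors
(`t = w s_i w⁻¹`), the subset `X_t = { w h_{i,i+1}(α) w⁻¹ : α ∈ F_b } =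
{ h_{k,l}(α) : α^b = 1 }` of `H_b`. -/
def Xset (K : Type) [Field K] (n b : ℕ) (t : GLn K n) : Set (GLn K n) :=
  {d | ∃ k l : Fin n, ∃ α : K, α ^ b = 1 ∧ k ≠ l ∧
    (∀ p q : Fin n, (t : Matrix (Fin n) (Fin n) K) p q = if Equiv.swap k l q = p then 1 else 0) ∧
    (d : Matrix (Fin n) (Fin n) K) = hmat K b k l α}

/-- `X_s = { h_{k,l}(α) : α^b = 1 }` for the simple reflection `s` interchanging the
`k`-th and `l`-th standard basis vectors. -/
def XsPair (K : Type) [Field K] {n : ℕ} (b : ℕ) (k l : Fin n) : Set (GLn K n) :=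
  {d | ∃ α : K, α ^ b = 1 ∧ (d : Matrix (Fin n) (Fin n) K) = hmat K b k l α}

/-- The product `X_1 ⋯ X_r` of a list of subsets of a monoid. -/
def SetProd {G : Type} [Monoid G] : List (Set G) → Set G
  | [] => {1}
  | X :: L => X * SetProd L

/-- `U`: the group of upper triangular unipotent matrices. -/
def Uset (K : Type) [Field K] (n : ℕ) : Set (GLn K n) :=
  {g | (∀ i j : Fin n, j < i → (g : Matrix (Fin n) (Fin n) K) i j = 0) ∧
    ∀ i : Fin n, (g : Matrix (Fin n) (Fin n) K) i i = 1}

/-- `H_a`: the group of diagonal matrices with entries in `F_a` (the `a`-th roots of unity). -/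
def Haset (K : Type) [Field K] (n a : ℕ) : Set (GLn K n) :=
  {g | (∀ i j : Fin n, i ≠ j → (g : Matrix (Fin n) (Fin n) K) i j = 0) ∧
    ∀ i : Fin n, (g : Matrix (Fin n) (Fin n) K) i i ^ a = 1}

/-- `B_a = H_a U`. -/
def Baset (K : Type) [Field K] (n a : ℕ) : Set (GLn K n) :=
  {g | ∃ h ∈ Haset K n a, ∃ u ∈ Uset K n, g = h * u}

/-- `X_0 = { h_1(ζ^{a i}) : 0 ≤ i ≤ b - 1 }`. -/
def X0set (F : Type) [Field F] (n a b : ℕ) (hn : 0 < n) (ζ : Fˣ) : Set (GLn F n) :=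
  {d | ∃ i : ℕ, i < b ∧ (d : Matrix (Fin n) (Fin n) F) =
    Matrix.diagonal fun p => if p = (⟨0, hn⟩ : Fin n) then (ζ : F) ^ (a * i) else 1}

/-- The domain `X_0 × X_{s_1} × ⋯ × X_{s_{n-1}}` of the multiplication map. -/
def MultDom (F : Type) [Field F] (n a b : ℕ) (hn : 0 < n) (ζ : Fˣ) : Type :=
  ↥(X0set F n a b hn ζ) ×
    ∀ i : Fin (n - 1), ↥(XsPair F b (⟨(i : ℕ), by have := i.isLt; omega⟩ : Fin n)
      (⟨(i : ℕ) + 1, by have := i.isLt; omega⟩ : Fin n))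

/-- The multiplication mapping `(d₀, d₁, …, d_{n-1}) ↦ d₀ d₁ ⋯ d_{n-1}`. -/
def multMap (F : Type) [Field F] (n a b : ℕ) (hn : 0 < n) (ζ : Fˣ)
    (p : MultDom F n a b hn ζ) : GLn F n :=
  (p.1 : GLn F n) * (List.ofFn fun i => (p.2 i : GLn F n)).prod

/-! All factors are diagonal with `b`-th roots of unity on the diagonal, so the question lives in
the group `μ_b^n` of diagonal entries. There, with `c = (-1)^(b-1)`, the product
`h_1(u) h_{1,2}(α_1) ⋯ h_{n-1,n}(α_{n-1})` has diagonal
`(u α_1, c α_2 / α_1, …, c α_{n-1} / α_{n-2}, c / α_{n-1})`: its first entry is `u α_1`, and the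
others form a product of the same shape with `u` replaced by `c / α_1`. By induction on `n`,
every vector in `μ_b^n` arises from exactly one `(u, α)`. Finally `X_0 = h_1(μ_b)`, because `ζ^a`
has order `b`. -/

section HProd

variable {G : Type*} [CommGroup G]

/-- The diagonal of `h_{k,l}(x)` (see `hmat`), with a general `c` in place of `(-1)^(b-1)`. -/
def hVec {ι : Type*} [DecidableEq ι] (c : G) (k l : ι) (x : G) : ι → G :=
  fun p => if p = k then x else if p = l then c * x⁻¹ else 1

/-- The diagonal of `h_1(u) h_{1,2}(α_1) ⋯ h_{m,m+1}(α_m)`. -/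
def hProd {m : ℕ} (c u : G) (α : Fin m → G) : Fin (m + 1) → G :=
  Pi.mulSingle 0 u * ∏ i, hVec c i.castSucc i.succ (α i)

lemma hVec_succ_succ {m : ℕ} (c : G) (k l : Fin m) (x : G) :
    hVec c k.succ l.succ x = Fin.cons 1 (hVec c k l x) := by
  ext q
  refine Fin.cases ?_ (fun q => ?_) q <;> simp [hVec, (Fin.succ_ne_zero _).symm]

lemma hVec_zero_one {m : ℕ} (c : G) (x : G) :
    hVec c (0 : Fin (m + 2)) 1 x = Fin.cons x (Pi.mulSingle 0 (c * x⁻¹)) := by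
  ext q
  refine Fin.cases ?_ (fun q => ?_) q
  · simp [hVec]
  · simp only [hVec, Fin.cons_succ, Pi.mulSingle_apply, Fin.succ_ne_zero, ← Fin.succ_zero_eq_one,
      Fin.succ_inj, if_false]

lemma hProd_zero (c u : G) (α : Fin 0 → G) : hProd c u α = Pi.mulSingle 0 u := by
  simp [hProd]

lemma hProd_succ {m : ℕ} (c u : G) (α : Fin (m + 1) → G) :
    hProd c u α = Fin.cons (u * α 0) (hProd c (c * (α 0)⁻¹) (Fin.tail α)) := by
  ext q
  simp only [hProd, Fin.prod_univ_succ, ← Fin.succ_castSucc, hVec_succ_succ, Fin.castSucc_zero,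
    Fin.succ_zero_eq_one, hVec_zero_one, Pi.mul_apply, Finset.prod_apply]
  refine Fin.cases ?_ (fun q => ?_) q <;> simp [Fin.tail]

lemma hProd_injective2 {m : ℕ} (c : G) : Function.Injective2 (hProd (m := m) c) := by
  induction m with
  | zero =>
    intro u u' α α' h
    exact ⟨by simpa [hProd_zero] using congrFun h 0, Subsingleton.elim _ _⟩
  | succ m ih =>
    intro u u' α α' h
    rw [hProd_succ, hProd_succ, Fin.cons_inj] at h
    obtain ⟨h0, htail⟩ := h
    obtain ⟨hα0, htail⟩ := ih htail
    have hα0 : α 0 = α' 0 := by simpa using hα0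
    refine ⟨by rwa [hα0, mul_left_inj] at h0, ?_⟩
    rw [← Fin.cons_self_tail α, ← Fin.cons_self_tail α', hα0, htail]

lemma hProd_surjective {m : ℕ} (c : G) (β : Fin (m + 1) → G) : ∃ u α, hProd c u α = β := by
  induction m with
  | zero => exact ⟨β 0, Fin.elim0, by rw [hProd_zero]; ext q; fin_cases q; simp⟩
  | succ m ih =>
    obtain ⟨v, γ, hv⟩ := ih (Fin.tail β)
    refine ⟨β 0 * v * c⁻¹, Fin.cons (c * v⁻¹) γ, ?_⟩
    rw [hProd_succ, ← Fin.cons_self_tail β]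
    simp only [Fin.cons_zero, Fin.tail_cons, mul_inv_rev, inv_inv, mul_inv_cancel_comm_assoc, hv]
    congr 1
    group

lemma hProd_bijective {m : ℕ} (c : G) :
    Function.Bijective (Function.uncurry (hProd (m := m) c)) :=
  ⟨(hProd_injective2 c).uncurry, fun β => by
    obtain ⟨u, α, h⟩ := hProd_surjective c β
    exact ⟨(u, α), h⟩⟩

end HProd

lemma exists_lt_pow_mul_eq_of_pow_eq_one {M : Type*} [Monoid M] {ζ x : M} {a b : ℕ}
    (hb : 0 < b) (hord : orderOf ζ = a * b) (hx : x ∈ Submonoid.powers ζ) (hxb : x ^ b = 1) :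
    ∃ i < b, ζ ^ (a * i) = x := by
  obtain ⟨k, rfl⟩ := hx
  have hak : a ∣ k := by
    refine Nat.dvd_of_mul_dvd_mul_right hb ?_
    rw [← hord]
    exact orderOf_dvd_of_pow_eq_one (by rwa [← pow_mul] at hxb)
  obtain ⟨j, rfl⟩ := hak
  exact ⟨j % b, Nat.mod_lt _ hb, by rw [← Nat.mul_mod_mul_left, ← hord, pow_mod_orderOf]⟩

section RootsDiag

variable {R : Type*} [CommRing R] {n b : ℕ}

def negOnePowRoot (R : Type*) [CommRing R] (b : ℕ) : rootsOfUnity b R :=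
  ⟨(-1) ^ (b - 1), by
    rw [mem_rootsOfUnity, ← pow_mul, mul_comm]
    exact (Nat.even_mul_pred_self b).neg_one_pow⟩

@[simp] lemma coe_negOnePowRoot : ((negOnePowRoot R b : Rˣ) : R) = (-1) ^ (b - 1) := by
  simp [negOnePowRoot]

def rootsDiag (R : Type*) [CommRing R] (n b : ℕ) : (Fin n → rootsOfUnity b R) →* GL (Fin n) R :=
  (Units.map (Matrix.diagonalRingHom (Fin n) R).toMonoidHom).comp
    (MulEquiv.piUnits.symm.toMonoidHom.comp ((rootsOfUnity b R).subtype.compLeft (Fin n)))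

lemma coe_rootsDiag (β : Fin n → rootsOfUnity b R) :
    (rootsDiag R n b β : Matrix (Fin n) (Fin n) R) = Matrix.diagonal fun i => ((β i : Rˣ) : R) :=
  rfl

lemma rootsDiag_injective : Function.Injective (rootsDiag R n b) := fun β β' h => by
  have hdiag := congrArg (fun g : GL (Fin n) R => (g : Matrix (Fin n) (Fin n) R)) h
  simp only [coe_rootsDiag, Matrix.diagonal_eq_diagonal_iff] at hdiag
  exact funext fun i => Subtype.ext (Units.ext (hdiag i))

end RootsDiag

section Factors

variable {F : Type} [Field F] {n b : ℕ}

lemma coe_rootsDiag_hVec (k l : Fin n) (x : rootsOfUnity b F) :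
    (rootsDiag F n b (hVec (negOnePowRoot F b) k l x) : Matrix (Fin n) (Fin n) F) =
      hmat F b k l ((x : Fˣ) : F) := by
  rw [coe_rootsDiag, hmat]
  congr 1
  funext p
  simp only [hVec]
  split_ifs <;> simp

lemma coe_rootsDiag_mulSingle (k : Fin n) (u : rootsOfUnity b F) :
    (rootsDiag F n b (Pi.mulSingle k u) : Matrix (Fin n) (Fin n) F) =
      Matrix.diagonal fun p => if p = k then ((u : Fˣ) : F) else 1 := by
  rw [coe_rootsDiag]
  congr 1
  funext p
  rw [Pi.mulSingle_apply]
  split_ifs <;> simp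

variable [NeZero b]

lemma Hbset_eq_range_rootsDiag : Hbset F n b = Set.range (rootsDiag F n b) := by
  ext g
  constructor
  · rintro ⟨hoff, hdiag⟩
    refine ⟨fun i => rootsOfUnity.mkOfPowEq _ (hdiag i), Units.ext ?_⟩
    ext i j
    by_cases hij : i = j
    · subst hij
      simp [coe_rootsDiag]
    · simp [coe_rootsDiag, hij, hoff i j hij]
  · rintro ⟨β, rfl⟩
    refine ⟨fun i j hij => by simp [coe_rootsDiag, hij], fun i => ?_⟩
    simpa [coe_rootsDiag] using (mem_rootsOfUnity' b _).1 (β i).2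

lemma XsPair_eq_range (k l : Fin n) :
    XsPair F b k l = Set.range fun x => rootsDiag F n b (hVec (negOnePowRoot F b) k l x) := by
  ext d
  constructor
  · rintro ⟨α, hα, hd⟩
    exact ⟨rootsOfUnity.mkOfPowEq α hα,
      Units.ext (by rw [coe_rootsDiag_hVec, rootsOfUnity.coe_mkOfPowEq, hd])⟩
  · rintro ⟨x, rfl⟩
    exact ⟨_, (mem_rootsOfUnity' b _).1 x.2, coe_rootsDiag_hVec k l x⟩

lemma X0set_eq_range {a : ℕ} (hn : 0 < n) {ζ : Fˣ} (hgen : ∀ x : Fˣ, x ∈ Submonoid.powers ζ)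
    (hord : orderOf ζ = a * b) :
    X0set F n a b hn ζ = Set.range fun u => rootsDiag F n b (Pi.mulSingle ⟨0, hn⟩ u) := by
  ext d
  constructor
  · rintro ⟨i, -, hd⟩
    have hroot : ζ ^ (a * i) ∈ rootsOfUnity b F := by
      rw [mem_rootsOfUnity, ← pow_mul, mul_right_comm, pow_mul, ← hord, pow_orderOf_eq_one,
        one_pow]
    exact ⟨⟨_, hroot⟩, Units.ext (by rw [coe_rootsDiag_mulSingle, hd]; simp)⟩
  · rintro ⟨u, rfl⟩
    obtain ⟨i, hi, hζi⟩ := exists_lt_pow_mul_eq_of_pow_eq_one (NeZero.pos b) hord (hgen u)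
      ((mem_rootsOfUnity b _).1 u.2)
    exact ⟨i, hi, by rw [coe_rootsDiag_mulSingle, ← hζi, Units.val_pow_eq_pow_val]⟩

end Factors

section Parametrization

variable {F : Type} [Field F] {m a b : ℕ} [NeZero b] {ζ : Fˣ}

def multDomOfRoots (hgen : ∀ x : Fˣ, x ∈ Submonoid.powers ζ) (hord : orderOf ζ = a * b)
    (p : rootsOfUnity b F × (Fin m → rootsOfUnity b F)) : MultDom F (m + 1) a b m.succ_pos ζ :=
  (⟨rootsDiag F (m + 1) b (Pi.mulSingle 0 p.1), by
      rw [X0set_eq_range _ hgen hord]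
      exact ⟨p.1, rfl⟩⟩,
    fun i => ⟨rootsDiag F (m + 1) b (hVec (negOnePowRoot F b) i.castSucc i.succ (p.2 i)), by
      rw [XsPair_eq_range]
      exact ⟨p.2 i, rfl⟩⟩)

lemma multDomOfRoots_surjective (hgen : ∀ x : Fˣ, x ∈ Submonoid.powers ζ)
    (hord : orderOf ζ = a * b) : Function.Surjective (multDomOfRoots (m := m) hgen hord) := by
  rintro ⟨⟨d₀, hd₀⟩, d⟩
  rw [X0set_eq_range _ hgen hord] at hd₀
  obtain ⟨u, rfl⟩ := hd₀
  have hd : ∀ i, ∃ x, rootsDiag F (m + 1) b (hVec (negOnePowRoot F b) i.castSucc i.succ x) = d i :=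
    fun i => (XsPair_eq_range _ _).le (d i).2
  choose α hα using hd
  exact ⟨(u, α), Prod.ext rfl (funext fun i => Subtype.ext (hα i))⟩

lemma multMap_multDomOfRoots (hgen : ∀ x : Fˣ, x ∈ Submonoid.powers ζ)
    (hord : orderOf ζ = a * b) (p : rootsOfUnity b F × (Fin m → rootsOfUnity b F)) :
    multMap F (m + 1) a b m.succ_pos ζ (multDomOfRoots hgen hord p) =
      rootsDiag F (m + 1) b (hProd (negOnePowRoot F b) p.1 p.2) := by
  rw [hProd, map_mul, ← List.prod_ofFn, map_list_prod, List.map_ofFn]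
  rfl

end Parametrization

theorem multiplication_map_bijective
    (F : Type) [Field F] [Fintype F] (n a b : ℕ)
    (hn : 0 < n) (hb : 0 < b)
    (hab : a * b = Fintype.card F - 1)
    (ζ : Fˣ) (hζ : ∀ x : Fˣ, x ∈ Subgroup.zpowers ζ) :
    Function.Injective (multMap F n a b hn ζ) ∧
    Set.range (multMap F n a b hn ζ) = Hbset F n b := by
  obtain ⟨m, rfl⟩ := Nat.exists_eq_add_one_of_ne_zero hn.ne'
  have : NeZero b := ⟨hb.ne'⟩
  have hgen : ∀ x : Fˣ, x ∈ Submonoid.powers ζ := fun x => mem_powers_iff_mem_zpowers.2 (hζ x)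
  have hord : orderOf ζ = a * b := by
    rw [orderOf_eq_card_of_forall_mem_zpowers hζ, Nat.card_units, Nat.card_eq_fintype_card, hab]
  have hΦ := multDomOfRoots_surjective (m := m) hgen hord
  have hcomp : multMap F (m + 1) a b hn ζ ∘ multDomOfRoots hgen hord =
      rootsDiag F (m + 1) b ∘ Function.uncurry (hProd (negOnePowRoot F b)) :=
    funext (multMap_multDomOfRoots hgen hord)
  refine ⟨Function.Injective.of_comp_right ?_ hΦ, ?_⟩
  · rw [hcomp]
    exact rootsDiag_injective.comp (hProd_bijective _).injective
  · rw [← hΦ.range_comp, hcomp, Set.range_comp, (hProd_bijective _).surjective.range_eq,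
      Set.image_univ, Hbset_eq_range_rootsDiag]
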